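/- Let g : ℕ → ℕ be monotone (strictly increasing) with g(n) ≥ n² for all n ≥ 2. If k, n, j are natural numbers with n ≥ 2 and g^j(2) ≤ g^k(n), then j ≤ k + ⌈log₂ log₂ n⌉ (in particular j ≤ k + log₂ log₂ n + 1). -/

import Mathlib

open Real

/-
Squaring at every step from `2` gives `2 ^ 2 ^ m ≤ g^[m] 2`. Cancelling the common `k` outer
iterates of the strictly monotone `g` turns `g^[j] 2 ≤ g^[k] n` into `g^[j - k] 2 ≤ n`, hence
`2 ^ 2 ^ (j - k) ≤ n`, i.e. `j - k ≤ log₂ log₂ n`.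
-/

theorem pow_two_pow_le_iterate {g : ℕ → ℕ} (hg : ∀ n, 2 ≤ n → n ^ 2 ≤ g n) {a : ℕ}
    (ha : 2 ≤ a) (m : ℕ) : a ^ 2 ^ m ≤ g^[m] a := by
  induction m with
  | zero => simp
  | succ m ih =>
    have h2 : 2 ≤ g^[m] a :=
      ha.trans <| (Nat.le_self_pow (Nat.two_pow_pos m).ne' a).trans ih
    calc a ^ 2 ^ (m + 1) = (a ^ 2 ^ m) ^ 2 := by ring
      _ ≤ (g^[m] a) ^ 2 := Nat.pow_le_pow_left ih 2
      _ ≤ g (g^[m] a) := hg _ h2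
      _ = g^[m + 1] a := (Function.iterate_succ_apply' g m a).symm

theorem StrictMono.iterate_sub_le {g : ℕ → ℕ} (hmono : StrictMono g) {a j k n : ℕ}
    (ha : a ≤ n) (h : g^[j] a ≤ g^[k] n) : g^[j - k] a ≤ n := by
  rcases le_total j k with hjk | hkj
  · simpa [Nat.sub_eq_zero_of_le hjk] using ha
  · rw [← Nat.add_sub_cancel' hkj, Function.iterate_add_apply] at h
    exact (hmono.iterate k).le_iff_le.mp h

theorem le_logb_logb_of_two_pow_two_pow_le {m n : ℕ} (h : 2 ^ 2 ^ m ≤ n) :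
    (m : ℝ) ≤ logb 2 (logb 2 n) := by
  have hn : (2 : ℝ) ≤ n := by
    exact_mod_cast (Nat.le_self_pow (Nat.two_pow_pos m).ne' 2).trans h
  have hlog : 0 < logb 2 (n : ℝ) := logb_pos one_lt_two (by linarith)
  rw [le_logb_iff_rpow_le one_lt_two hlog, le_logb_iff_rpow_le one_lt_two (by linarith),
    rpow_natCast, ← Nat.cast_ofNat, ← Nat.cast_pow, rpow_natCast, ← Nat.cast_pow]
  exact_mod_cast h

/-- If `g` is strictly increasing with `g n ≥ n ^ 2` for `n ≥ 2`, and
`g^[j] 2 ≤ g^[k] n` with `n ≥ 4`, then `j ≤ k + ⌈log₂ log₂ n⌉`, in particular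
`j ≤ k + log₂ log₂ n + 1`. -/
theorem iterate_length_bound (g : ℕ → ℕ) (hmono : StrictMono g)
    (hg : ∀ n, 2 ≤ n → n ^ 2 ≤ g n) (j k n : ℕ) (hn : 4 ≤ n)
    (h : g^[j] 2 ≤ g^[k] n) :
    (j : ℝ) ≤ k + ⌈Real.logb 2 (Real.logb 2 n)⌉ ∧
      (j : ℝ) ≤ k + Real.logb 2 (Real.logb 2 n) + 1 := by
  have hsub : 2 ^ 2 ^ (j - k) ≤ n :=
    (pow_two_pow_le_iterate hg le_rfl _).trans (hmono.iterate_sub_le (by omega) h)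
  have hj : (j : ℝ) ≤ k + (j - k : ℕ) := by exact_mod_cast le_add_tsub
  have key : (j : ℝ) ≤ k + logb 2 (logb 2 n) :=
    hj.trans (by gcongr; exact le_logb_logb_of_two_pow_two_pow_le hsub)
  exact ⟨key.trans (by gcongr; exact Int.le_ceil _), by linarith⟩
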